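/- Let A = {(0,0), (1,0), (0,δ), (δ−1,1)} ⊂ ℤ² for an integer δ ≥ 3. Then the convex hull of A is a quadrilateral with no two parallel edges, and consequently any Laurent polynomial with support A that factors nontrivially has a minimal binomial factor; but since no edge direction is repeated, in fact the Newton polygon admits no decomposition as a Minkowski sum of a segment and another polygon, so every Laurent polynomial with support A is irreducible. -/

import Mathlib

/-- The real point corresponding to a lattice point. -/
noncomputable def toR {n : ℕ} (u : Fin n → ℤ) : Fin n → ℝ := fun i => (u i : ℝ)

/-- The cross product (determinant) of two vectors in `ℤ²`; nonzero iff non-parallel. -/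
def cross (u v : Fin 2 → ℤ) : ℤ := u 0 * v 1 - u 1 * v 0

namespace Stmt17Aux

abbrev M : Type := Fin 2 → ℤ

lemma M.ext {u v : M} (h0 : u 0 = v 0) (h1 : u 1 = v 1) : u = v := by
  funext i
  fin_cases i
  · exact h0
  · exact h1

def dot (p q : ℤ) (u : M) : ℤ := p * u 0 + q * u 1

@[simp] lemma dot_pair (p q a b : ℤ) : dot p q ![a, b] = p * a + q * b := by
  simp [dot]

lemma dot_add (p q : ℤ) (u v : M) : dot p q (u + v) = dot p q u + dot p q v := by
  simp [dot, Pi.add_apply]; ring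

lemma dot_inj {p q p' q' : ℤ} (hdet : p * q' - q * p' ≠ 0) {u v : M}
    (h1 : dot p q u = dot p q v) (h2 : dot p' q' u = dot p' q' v) : u = v := by
  simp only [dot] at h1 h2
  have ha : (p * q' - q * p') * (u 0 - v 0) = 0 := by linear_combination q' * h1 - q * h2
  have hb : (p * q' - q * p') * (u 1 - v 1) = 0 := by linear_combination p * h2 - p' * h1
  rcases mul_eq_zero.mp ha with h | h
  · exact absurd h hdet
  · rcases mul_eq_zero.mp hb with h' | h'
    · exact absurd h' hdet
    · exact M.ext (by omega) (by omega)

structure LexTop (p q p' q' : ℤ) (S : Finset M) (s : M) : Prop where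
  mem : s ∈ S
  max : ∀ t ∈ S, dot p q t < dot p q s ∨ (dot p q t = dot p q s ∧ dot p' q' t ≤ dot p' q' s)

lemma LexTop.le {p q p' q' : ℤ} {S : Finset M} {s : M} (hs : LexTop p q p' q' S s)
    {t : M} (ht : t ∈ S) : dot p q t ≤ dot p q s := by
  rcases hs.max t ht with h | ⟨h, _⟩
  · exact h.le
  · exact h.le

lemma lexTop_unique {p q p' q' : ℤ} (hdet : p * q' - q * p' ≠ 0) {S : Finset M} {s s' : M}
    (hs : LexTop p q p' q' S s) (hs' : LexTop p q p' q' S s') : s = s' := by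
  have h1 : dot p q s = dot p q s' := le_antisymm (hs'.le hs.mem) (hs.le hs'.mem)
  rcases hs.max s' hs'.mem with h | ⟨_, h2⟩
  · omega
  · rcases hs'.max s hs.mem with h | ⟨_, h2'⟩
    · omega
    · exact dot_inj hdet h1 (le_antisymm h2' h2)

lemma exists_lexTop (p q p' q' : ℤ) {S : Finset M} (hS : S.Nonempty) :
    ∃ s, LexTop p q p' q' S s := by
  obtain ⟨b, hb, hbmax⟩ := S.exists_max_image (dot p q) hS
  have hne : (S.filter (fun t => dot p q t = dot p q b)).Nonempty := ⟨b, by simp [hb]⟩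
  obtain ⟨s, hs, hsmax⟩ := (S.filter (fun t => dot p q t = dot p q b)).exists_max_image
    (dot p' q') hne
  simp only [Finset.mem_filter] at hs
  refine ⟨s, hs.1, fun t ht => ?_⟩
  rcases lt_or_eq_of_le (hbmax t ht) with h | h
  · left; omega
  · right
    refine ⟨by omega, hsmax t ?_⟩
    simp [ht, h]

end Stmt17Aux

namespace Stmt17Aux

variable {k : Type*} [CommRing k] [NoZeroDivisors k]

lemma lexTop_mul {p q p' q' : ℤ} (hdet : p * q' - q * p' ≠ 0)
    {g h : AddMonoidAlgebra k M} {sg th : M}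
    (hsg : LexTop p q p' q' g.coeff.support sg) (hth : LexTop p q p' q' h.coeff.support th) :
    LexTop p q p' q' (g * h).coeff.support (sg + th) := by
  have huniq : ∀ a ∈ g.coeff.support, ∀ b ∈ h.coeff.support, a + b = sg + th → a = sg ∧ b = th := by
    intro a ha b hb hab
    have e1 : dot p q a + dot p q b = dot p q sg + dot p q th := by
      rw [← dot_add, ← dot_add, hab]
    have la := hsg.le ha
    have lb := hth.le hb
    have ea : dot p q a = dot p q sg := by omega
    have eb : dot p q b = dot p q th := by omega
    have la2 : dot p' q' a ≤ dot p' q' sg := by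
      rcases hsg.max a ha with h' | ⟨_, h'⟩
      · omega
      · exact h'
    have lb2 : dot p' q' b ≤ dot p' q' th := by
      rcases hth.max b hb with h' | ⟨_, h'⟩
      · omega
      · exact h'
    have e2 : dot p' q' a + dot p' q' b = dot p' q' sg + dot p' q' th := by
      rw [← dot_add, ← dot_add, hab]
    exact ⟨dot_inj hdet ea (by omega), dot_inj hdet eb (by omega)⟩
  have hcoeff : (g * h).coeff (sg + th) = g.coeff sg * h.coeff th := by
    rw [AddMonoidAlgebra.coeff_mul, Finsupp.sum]
    rw [Finset.sum_eq_single_of_mem sg hsg.mem]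
    · rw [Finsupp.sum, Finset.sum_eq_single_of_mem th hth.mem]
      · rw [if_pos rfl]
      · intro b hb hbne
        rw [if_neg]
        intro hEq
        exact hbne (huniq sg hsg.mem b hb hEq).2
    · intro a ha hane
      rw [Finsupp.sum]
      apply Finset.sum_eq_zero
      intro b hb
      rw [if_neg]
      intro hEq
      exact hane (huniq a ha b hb hEq).1
  constructor
  · rw [Finsupp.mem_support_iff, hcoeff]
    exact mul_ne_zero (Finsupp.mem_support_iff.mp hsg.mem) (Finsupp.mem_support_iff.mp hth.mem)
  · intro t ht
    have ht' := AddMonoidAlgebra.support_coeff_mul_subset g h ht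
    rw [Finset.mem_add] at ht'
    obtain ⟨a, ha, b, hb, rfl⟩ := ht'
    have e := dot_add p q a b
    have e' := dot_add p' q' a b
    have e2 := dot_add p q sg th
    have e2' := dot_add p' q' sg th
    rcases hsg.max a ha with h1 | ⟨h1, h1'⟩ <;> rcases hth.max b hb with h2 | ⟨h2, h2'⟩ <;> omega

lemma isUnit_of_support_singleton {k : Type*} [Field k] (g : AddMonoidAlgebra k M) (s : M)
    (hs : g.coeff.support = {s}) : IsUnit g := by
  obtain ⟨hne, heq⟩ := Finsupp.support_eq_singleton.mp hs
  refine IsUnit.of_mul_eq_one (AddMonoidAlgebra.single (-s) (g.coeff s)⁻¹) ?_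
  nth_rewrite 1 [show g = AddMonoidAlgebra.single s (g.coeff s) from AddMonoidAlgebra.ext heq]
  rw [AddMonoidAlgebra.single_mul_single]
  simp only [add_neg_cancel, mul_inv_cancel₀ hne]
  rfl

end Stmt17Aux

namespace Stmt17Aux

section ATops

variable {δ : ℤ} (hδ : 3 ≤ δ) {A : Finset M}
  (hA : A = {![0, 0], ![1, 0], ![0, δ], ![δ - 1, 1]})

include hδ hA

lemma topA_d1 : LexTop 0 (-1) (-1) 0 A ![0, 0] := by
  constructor
  · simp [hA]
  · intro t ht
    rw [hA] at ht
    simp only [Finset.mem_insert, Finset.mem_singleton] at ht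
    rcases ht with rfl | rfl | rfl | rfl <;> simp <;> omega

lemma topA_d2 : LexTop 0 (-1) 1 0 A ![1, 0] := by
  constructor
  · simp [hA]
  · intro t ht
    rw [hA] at ht
    simp only [Finset.mem_insert, Finset.mem_singleton] at ht
    rcases ht with rfl | rfl | rfl | rfl <;> simp <;> omega

lemma topA_d3 : LexTop 0 1 1 0 A ![0, δ] := by
  constructor
  · simp [hA]
  · intro t ht
    rw [hA] at ht
    simp only [Finset.mem_insert, Finset.mem_singleton] at ht
    rcases ht with rfl | rfl | rfl | rfl <;> simp <;> omega

lemma topA_d5 : LexTop 1 0 0 1 A ![δ - 1, 1] := by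
  constructor
  · simp [hA]
  · intro t ht
    rw [hA] at ht
    simp only [Finset.mem_insert, Finset.mem_singleton] at ht
    rcases ht with rfl | rfl | rfl | rfl <;> simp <;> omega

lemma topA_d7 : LexTop (-1) 0 0 1 A ![0, δ] := by
  constructor
  · simp [hA]
  · intro t ht
    rw [hA] at ht
    simp only [Finset.mem_insert, Finset.mem_singleton] at ht
    rcases ht with rfl | rfl | rfl | rfl <;> simp <;> omega

lemma topA_d8 : LexTop 1 1 1 0 A ![δ - 1, 1] := by
  constructor
  · simp [hA]
  · intro t ht
    rw [hA] at ht
    simp only [Finset.mem_insert, Finset.mem_singleton] at ht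
    rcases ht with rfl | rfl | rfl | rfl <;> simp <;> omega

lemma topA_d9 : LexTop 1 (2 - δ) 1 0 A ![δ - 1, 1] := by
  constructor
  · simp [hA]
  · intro t ht
    rw [hA] at ht
    simp only [Finset.mem_insert, Finset.mem_singleton] at ht
    rcases ht with rfl | rfl | rfl | rfl <;> simp <;>
      first
        | omega
        | (left; nlinarith [hδ])

end ATops

end Stmt17Aux

namespace Stmt17Aux

lemma pair_eq_iff {a b c d : ℤ} : (![a, b] : M) = ![c, d] ↔ a = c ∧ b = d := by
  constructor
  · intro hh
    exact ⟨congrFun hh 0, congrFun hh 1⟩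
  · rintro ⟨rfl, rfl⟩
    rfl

lemma pair_zero : (![0, 0] : M) = 0 := by
  funext i
  fin_cases i <;> rfl

lemma pair_sub {a b c d : ℤ} : (![a, b] : M) - ![c, d] = ![a - c, b - d] := by
  funext i
  fin_cases i <;> simp

lemma pair_add {a b c d : ℤ} : (![a, b] : M) + ![c, d] = ![a + c, b + d] := by
  funext i
  fin_cases i <;> simp

lemma eta_pair (u : M) : u = ![u 0, u 1] := M.ext rfl rfl

end Stmt17Aux

namespace Stmt17Aux

theorem aux_main {k : Type*} [Field k] [CharZero k]
    {δ : ℤ} (hδ : 3 ≤ δ)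
    {A : Finset M} (hA : A = {![0, 0], ![1, 0], ![0, δ], ![δ - 1, 1]})
    (f g h : AddMonoidAlgebra k M)
    (hf : f = g * h)
    (hsupp : f.coeff.support = A)
    (hg0 : (0 : M) ∈ g.coeff.support)
    (hgs : ∀ u ∈ g.coeff.support, 0 ≤ u 1 ∧ (u 1 = 0 → u = 0))
    (hg2 : ∃ u ∈ g.coeff.support, u ≠ 0) : False := by
  have hGH : (g * h).coeff.support = A := hf ▸ hsupp
  have hA00 : (![0, 0] : M) ∈ A := by simp [hA]
  have hhne : h ≠ 0 := by
    intro h0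
    rw [h0, mul_zero] at hf
    rw [hf, AddMonoidAlgebra.coeff_zero, Finsupp.support_zero] at hsupp
    rw [← hsupp] at hA00
    simp at hA00
  have hTne : h.coeff.support.Nonempty := Finsupp.support_nonempty_iff.mpr (mt AddMonoidAlgebra.coeff_eq_zero.mp hhne)
  -- I1 : direction (0,-1;-1,0)
  have hσ1 : LexTop 0 (-1) (-1) 0 g.coeff.support 0 := by
    refine ⟨hg0, fun t ht => ?_⟩
    obtain ⟨h1, h2⟩ := hgs t ht
    rcases eq_or_lt_of_le h1 with he | hlt
    · have ht0 : t = 0 := h2 he.symm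
      subst ht0
      right
      simp
    · left
      simp [dot]
      omega
  obtain ⟨τ1, hτ1⟩ := exists_lexTop 0 (-1) (-1) 0 hTne
  have hτ1v : τ1 = ![0, 0] := by
    have htopA := lexTop_mul (by norm_num) hσ1 hτ1
    rw [hGH] at htopA
    have := lexTop_unique (p := 0) (q := -1) (p' := -1) (q' := 0) (by norm_num)
      htopA (topA_d1 hδ hA)
    rwa [zero_add] at this
  rw [hτ1v] at hτ1
  have hT00 : (![0, 0] : M) ∈ h.coeff.support := hτ1.mem
  have hT1 : ∀ u ∈ h.coeff.support, 0 ≤ u 1 ∧ (u 1 = 0 → 0 ≤ u 0) := by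
    intro u hu
    rcases hτ1.max u hu with h' | ⟨h', h''⟩
    · simp [dot] at h'
      omega
    · simp [dot] at h' h''
      omega
  -- I2 : direction (0,-1;1,0)
  have hσ2 : LexTop 0 (-1) 1 0 g.coeff.support 0 := by
    refine ⟨hg0, fun t ht => ?_⟩
    obtain ⟨h1, h2⟩ := hgs t ht
    rcases eq_or_lt_of_le h1 with he | hlt
    · have ht0 : t = 0 := h2 he.symm
      subst ht0
      right
      simp
    · left
      simp [dot]
      omega
  obtain ⟨τ2, hτ2⟩ := exists_lexTop 0 (-1) 1 0 hTne
  have hτ2v : τ2 = ![1, 0] := by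
    have htopA := lexTop_mul (by norm_num) hσ2 hτ2
    rw [hGH] at htopA
    have := lexTop_unique (p := 0) (q := -1) (p' := 1) (q' := 0) (by norm_num)
      htopA (topA_d2 hδ hA)
    rwa [zero_add] at this
  rw [hτ2v] at hτ2
  have hT10 : (![1, 0] : M) ∈ h.coeff.support := hτ2.mem
  have hT2 : ∀ u ∈ h.coeff.support, u 1 = 0 → u 0 ≤ 1 := by
    intro u hu hu1
    rcases hτ2.max u hu with h' | ⟨h', h''⟩
    · simp [dot] at h'
      omega
    · simp [dot] at h' h''
      omega
  -- I7 : direction (-1,0;0,1) : x >= 0 on both supports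
  obtain ⟨σ7, hσ7⟩ := exists_lexTop (-1) 0 0 1 ⟨0, hg0⟩
  obtain ⟨τ7, hτ7⟩ := exists_lexTop (-1) 0 0 1 hTne
  have heq7 : σ7 + τ7 = ![0, δ] := by
    have htopA := lexTop_mul (by norm_num) hσ7 hτ7
    rw [hGH] at htopA
    exact lexTop_unique (p := -1) (q := 0) (p' := 0) (q' := 1) (by norm_num)
      htopA (topA_d7 hδ hA)
  have hσ7x : σ7 0 = 0 ∧ τ7 0 = 0 := by
    have e0 : σ7 0 + τ7 0 = 0 := by
      have := congrFun heq7 0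
      simpa using this
    have l1 : dot (-1) 0 0 ≤ dot (-1) 0 σ7 := hσ7.le hg0
    have l2 : dot (-1) 0 ![0, 0] ≤ dot (-1) 0 τ7 := hτ7.le hT00
    simp [dot] at l1 l2
    omega
  have hSx : ∀ u ∈ g.coeff.support, 0 ≤ u 0 := by
    intro u hu
    have := hσ7.le hu
    simp [dot] at this
    omega
  have hTx : ∀ u ∈ h.coeff.support, 0 ≤ u 0 := by
    intro u hu
    have := hτ7.le hu
    simp [dot] at this
    omega
  -- I3 : direction (0,1;1,0) : north points
  obtain ⟨σ3, hσ3⟩ := exists_lexTop 0 1 1 0 ⟨0, hg0⟩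
  obtain ⟨τ3, hτ3⟩ := exists_lexTop 0 1 1 0 hTne
  have heq3 : σ3 + τ3 = ![0, δ] := by
    have htopA := lexTop_mul (by norm_num) hσ3 hτ3
    rw [hGH] at htopA
    exact lexTop_unique (p := 0) (q := 1) (p' := 1) (q' := 0) (by norm_num)
      htopA (topA_d3 hδ hA)
  have heq3x : σ3 0 + τ3 0 = 0 := by
    have := congrFun heq3 0
    simpa using this
  have heq3y : σ3 1 + τ3 1 = δ := by
    have := congrFun heq3 1
    simpa using this
  have hσ3x : σ3 0 = 0 ∧ τ3 0 = 0 := by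
    have l1 := hSx σ3 hσ3.mem
    have l2 := hTx τ3 hτ3.mem
    omega
  have hSyle : ∀ u ∈ g.coeff.support, u 1 ≤ σ3 1 := by
    intro u hu
    have := hσ3.le hu
    simp [dot] at this
    omega
  have hTyle : ∀ u ∈ h.coeff.support, u 1 ≤ τ3 1 := by
    intro u hu
    have := hτ3.le hu
    simp [dot] at this
    omega
  -- I5 : direction (1,0;0,1) : east points
  obtain ⟨σ5, hσ5⟩ := exists_lexTop 1 0 0 1 ⟨0, hg0⟩
  obtain ⟨τ5, hτ5⟩ := exists_lexTop 1 0 0 1 hTne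
  have heq5 : σ5 + τ5 = ![δ - 1, 1] := by
    have htopA := lexTop_mul (by norm_num) hσ5 hτ5
    rw [hGH] at htopA
    exact lexTop_unique (p := 1) (q := 0) (p' := 0) (q' := 1) (by norm_num)
      htopA (topA_d5 hδ hA)
  have heq5x : σ5 0 + τ5 0 = δ - 1 := by
    have := congrFun heq5 0
    simpa using this
  have heq5y : σ5 1 + τ5 1 = 1 := by
    have := congrFun heq5 1
    simpa using this
  -- I8 : direction (1,1;1,0)
  obtain ⟨σ8, hσ8⟩ := exists_lexTop 1 1 1 0 ⟨0, hg0⟩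
  obtain ⟨τ8, hτ8⟩ := exists_lexTop 1 1 1 0 hTne
  have heq8 : σ8 + τ8 = ![δ - 1, 1] := by
    have htopA := lexTop_mul (by norm_num) hσ8 hτ8
    rw [hGH] at htopA
    exact lexTop_unique (p := 1) (q := 1) (p' := 1) (q' := 0) (by norm_num)
      htopA (topA_d8 hδ hA)
  have heq8d : (σ8 0 + σ8 1) + (τ8 0 + τ8 1) = δ := by
    have h0 := congrFun heq8 0
    have h1 := congrFun heq8 1
    simp at h0 h1
    omega
  have hτ8ge : 1 ≤ τ8 0 + τ8 1 := by
    have := hτ8.le hT10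
    simp [dot] at this
    omega
  have hS_slant : ∀ u ∈ g.coeff.support, u 0 + u 1 ≤ δ - 1 := by
    intro u hu
    have := hσ8.le hu
    simp [dot] at this
    omega
  -- I9 : direction (1,2-δ;1,0)
  obtain ⟨σ9, hσ9⟩ := exists_lexTop 1 (2 - δ) 1 0 ⟨0, hg0⟩
  obtain ⟨τ9, hτ9⟩ := exists_lexTop 1 (2 - δ) 1 0 hTne
  have heq9 : σ9 + τ9 = ![δ - 1, 1] := by
    have htopA := lexTop_mul (by omega) hσ9 hτ9
    rw [hGH] at htopA
    exact lexTop_unique (p := 1) (q := 2 - δ) (p' := 1) (q' := 0) (by omega)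
      htopA (topA_d9 hδ hA)
  have heq9d : (σ9 0 + (2 - δ) * σ9 1) + (τ9 0 + (2 - δ) * τ9 1) = 1 := by
    have h0 := congrFun heq9 0
    have h1 := congrFun heq9 1
    simp at h0 h1
    nlinarith [h0, h1]
  have hτ9ge : 1 ≤ τ9 0 + (2 - δ) * τ9 1 := by
    have := hτ9.le hT10
    simp [dot] at this
    omega
  have hS_d9 : ∀ u ∈ g.coeff.support, u 0 + (2 - δ) * u 1 ≤ 0 := by
    intro u hu
    have := hσ9.le hu
    simp [dot] at this
    omega
  -- east case analysis
  have hσ5y : σ5 1 = 1 ∧ τ5 1 = 0 := by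
    have l1 := (hgs σ5 hσ5.mem).1
    have l2 := (hT1 τ5 hτ5.mem).1
    rcases eq_or_lt_of_le l1 with he | hlt
    · -- σ5 1 = 0 : then σ5 = 0 and g.coeff.support = {0}, contradiction
      exfalso
      have hσ50 : σ5 = 0 := (hgs σ5 hσ5.mem).2 he.symm
      obtain ⟨u, hu, hune⟩ := hg2
      rcases hσ5.max u hu with h' | ⟨h', h''⟩
      · rw [hσ50] at h'
        have := hSx u hu
        simp [dot] at h'
        omega
      · rw [hσ50] at h' h''
        simp [dot] at h' h''
        have hy := (hgs u hu).1
        have : u 1 = 0 := by omega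
        have := (hgs u hu).2 this
        exact hune this
    · omega
  have hτ5v : τ5 0 = 1 := by
    have hb := hT2 τ5 hτ5.mem hσ5y.2
    have hge := hTx τ5 hτ5.mem
    rcases eq_or_lt_of_le hge with he | hlt
    · exfalso
      have := hτ5.le hT10
      simp [dot] at this
      omega
    · omega
  have hσ5v : σ5 0 = δ - 2 := by omega
  -- F8 : T is contained in x + y <= 1
  have hσ8ge : δ - 1 ≤ σ8 0 + σ8 1 := by
    have := hσ8.le hσ5.mem
    simp [dot] at this
    omega
  have hT_slant : ∀ u ∈ h.coeff.support, u 0 + u 1 ≤ 1 := by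
    intro u hu
    have l1 := hτ8.le hu
    have l2 := hS_slant σ8 hσ8.mem
    simp [dot] at l1
    omega
  -- F9 : ![0,1] ∈ T
  have hτ3v : τ3 = ![0, 1] := by
    have l1 := hT_slant τ3 hτ3.mem
    have l2 := hS_slant σ3 hσ3.mem
    refine M.ext ?_ ?_ <;> simp <;> omega
  have hT01 : (![0, 1] : M) ∈ h.coeff.support := hτ3v ▸ hτ3.mem
  -- characterization of T
  have hTeq : h.coeff.support = {![0, 0], ![1, 0], ![0, 1]} := by
    apply Finset.ext
    intro u
    constructor
    · intro hu
      have l1 := (hT1 u hu).1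
      have l2 := hTx u hu
      have l3 := hT_slant u hu
      simp only [Finset.mem_insert, Finset.mem_singleton]
      have : (u 0 = 0 ∧ u 1 = 0) ∨ (u 0 = 1 ∧ u 1 = 0) ∨ (u 0 = 0 ∧ u 1 = 1) := by omega
      rcases this with ⟨e0, e1⟩ | ⟨e0, e1⟩ | ⟨e0, e1⟩
      · exact Or.inl (M.ext (by simp [e0]) (by simp [e1]))
      · exact Or.inr (Or.inl (M.ext (by simp [e0]) (by simp [e1])))
      · exact Or.inr (Or.inr (M.ext (by simp [e0]) (by simp [e1])))
    · intro hu
      simp only [Finset.mem_insert, Finset.mem_singleton] at hu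
      rcases hu with rfl | rfl | rfl
      · exact hT00
      · exact hT10
      · exact hT01
  -- now the coefficient recursion
  have hu0 : h.coeff ![0,0] ≠ 0 := Finsupp.mem_support_iff.mp hT00
  have hu1 : h.coeff ![1,0] ≠ 0 := Finsupp.mem_support_iff.mp hT10
  have hu2 : h.coeff ![0,1] ≠ 0 := Finsupp.mem_support_iff.mp hT01
  have hne1 : (![1,0] : M) ≠ ![0,0] := by
    rw [Ne, pair_eq_iff]; omega
  have hne2 : (![0,1] : M) ≠ ![0,0] := by
    rw [Ne, pair_eq_iff]; omega
  have hne3 : (![0,1] : M) ≠ ![1,0] := by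
    rw [Ne, pair_eq_iff]; omega
  have hsum : h = AddMonoidAlgebra.single ![0,0] (h.coeff ![0,0])
      + AddMonoidAlgebra.single ![1,0] (h.coeff ![1,0])
      + AddMonoidAlgebra.single ![0,1] (h.coeff ![0,1]) := by
    apply AddMonoidAlgebra.ext
    apply Finsupp.ext
    intro x
    rw [AddMonoidAlgebra.coeff_add, AddMonoidAlgebra.coeff_add, Finsupp.add_apply, Finsupp.add_apply]
    simp only [AddMonoidAlgebra.coeff_single]
    by_cases h1 : x = ![0,0]
    · subst h1
      simp [Finsupp.single_apply, pair_eq_iff]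
    · by_cases h2 : x = ![1,0]
      · subst h2
        simp [Finsupp.single_apply, pair_eq_iff]
      · by_cases h3 : x = ![0,1]
        · subst h3
          simp [Finsupp.single_apply, pair_eq_iff]
        · have hx : x ∉ h.coeff.support := by
            rw [hTeq]
            simp only [Finset.mem_insert, Finset.mem_singleton]
            tauto
          rw [Finsupp.notMem_support_iff.mp hx, Finsupp.single_apply, Finsupp.single_apply,
            Finsupp.single_apply, if_neg (fun hc => h1 hc.symm), if_neg (fun hc => h2 hc.symm),
            if_neg (fun hc => h3 hc.symm)]
          ring
  have hcoefpq : ∀ p q : ℤ, f.coeff ![p,q] = g.coeff ![p,q] * h.coeff ![0,0]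
      + (g.coeff ![p-1,q] * h.coeff ![1,0] + g.coeff ![p,q-1] * h.coeff ![0,1]) := by
    intro p q
    have e0 : (![p,q] : M) - ![0,0] = ![p,q] := by
      rw [pair_sub, pair_eq_iff]; omega
    have e1 : (![p,q] : M) - ![1,0] = ![p-1,q] := by
      rw [pair_sub, pair_eq_iff]; omega
    have e2 : (![p,q] : M) - ![0,1] = ![p,q-1] := by
      rw [pair_sub, pair_eq_iff]; omega
    conv_lhs => rw [hf, hsum]
    rw [mul_add, mul_add, AddMonoidAlgebra.coeff_add, AddMonoidAlgebra.coeff_add,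
      Finsupp.add_apply, Finsupp.add_apply,
      AddMonoidAlgebra.coeff_mul_single_apply, AddMonoidAlgebra.coeff_mul_single_apply,
      AddMonoidAlgebra.coeff_mul_single_apply, ← sub_eq_add_neg, ← sub_eq_add_neg,
      ← sub_eq_add_neg, e0, e1, e2]
    ring
  have hgz : ∀ a b : ℤ, (a < 0 ∨ b < 0 ∨ δ - 1 < a + b ∨ 0 < a + (2 - δ) * b) →
      g.coeff ![a,b] = 0 := by
    intro a b hcond
    by_contra hne
    have hm : (![a,b] : M) ∈ g.coeff.support := Finsupp.mem_support_iff.mpr hne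
    have l1 := hSx _ hm
    have l2 := (hgs _ hm).1
    have l3 := hS_slant _ hm
    have l4 := hS_d9 _ hm
    simp only [Matrix.cons_val_zero, Matrix.cons_val_one, Matrix.head_cons] at l1 l2 l3 l4
    omega
  have hfz : ∀ a b : ℤ, (![a,b] : M) ∉ A → f.coeff ![a,b] = 0 := by
    intro a b ha
    rw [← hsupp] at ha
    exact Finsupp.notMem_support_iff.mp ha
  have hfA00 : f.coeff ![0,0] ≠ 0 := Finsupp.mem_support_iff.mp (by rw [hsupp]; exact hA00)
  have hc0 : g.coeff ![0,0] ≠ 0 := by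
    have heq := hcoefpq 0 0
    rw [hgz (0-1) 0 (by omega), hgz 0 (0-1) (by omega), zero_mul, zero_mul] at heq
    intro hz
    rw [hz, zero_mul] at heq
    apply hfA00
    rw [heq]
    ring
  have claim1 : ∀ n : ℕ, (n : ℤ) ≤ δ - 1 →
      g.coeff ![0, (n:ℤ)] * (h.coeff ![0,0]) ^ n = (-(h.coeff ![0,1])) ^ n * g.coeff ![0,0] := by
    intro n
    induction n with
    | zero => simp
    | succ m ih =>
      intro hle
      push_cast at hle ⊢
      have hle' : (m : ℤ) ≤ δ - 1 := by omega
      have hnotA : (![0, (m:ℤ)+1] : M) ∉ A := by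
        rw [hA]
        simp only [Finset.mem_insert, Finset.mem_singleton, pair_eq_iff]
        omega
      have heq := hcoefpq 0 ((m:ℤ)+1)
      have e2 : (![0-1, (m:ℤ)+1] : M) = ![-1, (m:ℤ)+1] := by
        rw [pair_eq_iff]; omega
      have e3 : (![0, (m:ℤ)+1-1] : M) = ![0, (m:ℤ)] := by
        rw [pair_eq_iff]; omega
      rw [hfz _ _ hnotA, e2, e3, hgz (-1) ((m:ℤ)+1) (by omega), zero_mul] at heq
      have e : g.coeff ![0,(m:ℤ)+1] * h.coeff ![0,0] = -(g.coeff ![0,(m:ℤ)] * h.coeff ![0,1]) := by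
        linear_combination -heq
      calc g.coeff ![0,(m:ℤ)+1] * (h.coeff ![0,0])^(m+1)
          = (g.coeff ![0,(m:ℤ)+1] * h.coeff ![0,0]) * (h.coeff ![0,0])^m := by ring
        _ = -(g.coeff ![0,(m:ℤ)] * h.coeff ![0,1]) * (h.coeff ![0,0])^m := by rw [e]
        _ = -(h.coeff ![0,1]) * (g.coeff ![0,(m:ℤ)] * (h.coeff ![0,0])^m) := by ring
        _ = -(h.coeff ![0,1]) * ((-(h.coeff ![0,1]))^m * g.coeff ![0,0]) := by rw [ih hle']
        _ = (-(h.coeff ![0,1]))^(m+1) * g.coeff ![0,0] := by ring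
  have claim2 : ∀ n : ℕ, (n : ℤ) ≤ δ - 1 →
      g.coeff ![1, (n:ℤ)] * (h.coeff ![0,0]) ^ (n+1)
        = -(n:k) * h.coeff ![1,0] * (-(h.coeff ![0,1])) ^ n * g.coeff ![0,0] := by
    intro n
    induction n with
    | zero =>
      intro _
      push_cast
      rw [hgz 1 0 (by omega)]
      simp
    | succ m ih =>
      intro hle
      push_cast at hle ⊢
      have hle' : (m : ℤ) ≤ δ - 1 := by omega
      have hnotA : (![1, (m:ℤ)+1] : M) ∉ A := by
        rw [hA]
        simp only [Finset.mem_insert, Finset.mem_singleton, pair_eq_iff]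
        omega
      have heq := hcoefpq 1 ((m:ℤ)+1)
      have e2 : (![1-1, (m:ℤ)+1] : M) = ![0, (m:ℤ)+1] := by
        rw [pair_eq_iff]; omega
      have e3 : (![1, (m:ℤ)+1-1] : M) = ![1, (m:ℤ)] := by
        rw [pair_eq_iff]; omega
      rw [hfz _ _ hnotA, e2, e3] at heq
      have e : g.coeff ![1,(m:ℤ)+1] * h.coeff ![0,0]
          = -(g.coeff ![0,(m:ℤ)+1] * h.coeff ![1,0] + g.coeff ![1,(m:ℤ)] * h.coeff ![0,1]) := by
        linear_combination -heq
      have ihm := ih hle'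
      have c1m := claim1 (m+1) (by push_cast; omega)
      push_cast at c1m
      calc g.coeff ![1,(m:ℤ)+1] * (h.coeff ![0,0])^(m+1+1)
          = (g.coeff ![1,(m:ℤ)+1] * h.coeff ![0,0]) * (h.coeff ![0,0])^(m+1) := by ring
        _ = -(g.coeff ![0,(m:ℤ)+1] * h.coeff ![1,0] + g.coeff ![1,(m:ℤ)] * h.coeff ![0,1]) * (h.coeff ![0,0])^(m+1) := by
            rw [e]
        _ = -(h.coeff ![1,0]) * (g.coeff ![0,(m:ℤ)+1] * (h.coeff ![0,0])^(m+1))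
              - h.coeff ![0,1] * ((g.coeff ![1,(m:ℤ)] * (h.coeff ![0,0])^(m+1))) := by ring
        _ = -(h.coeff ![1,0]) * ((-(h.coeff ![0,1]))^(m+1) * g.coeff ![0,0])
              - h.coeff ![0,1] * (-(m:k) * h.coeff ![1,0] * (-(h.coeff ![0,1]))^m * g.coeff ![0,0]) := by
            rw [c1m, ihm]
        _ = -((m:k)+1) * h.coeff ![1,0] * (-(h.coeff ![0,1]))^(m+1) * g.coeff ![0,0] := by ring
  -- the final contradiction
  have hNz : ((δ - 1).toNat : ℤ) = δ - 1 := Int.toNat_of_nonneg (by omega)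
  have h2 := claim2 (δ - 1).toNat (by omega)
  rw [hgz 1 (((δ-1).toNat : ℕ):ℤ) (by omega), zero_mul] at h2
  have hprod : -(((δ-1).toNat : ℕ):k) * h.coeff ![1,0] * (-(h.coeff ![0,1]))^(δ-1).toNat * g.coeff ![0,0] ≠ 0 := by
    apply mul_ne_zero
    apply mul_ne_zero
    apply mul_ne_zero
    · rw [neg_ne_zero, Nat.cast_ne_zero]
      omega
    · exact hu1
    · exact pow_ne_zero _ (neg_ne_zero.mpr hu2)
    · exact hc0
  exact hprod h2.symm

end Stmt17Aux

namespace Stmt17Aux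

lemma south_case {k : Type*} [Field k] [CharZero k]
    {δ : ℤ} (hδ : 3 ≤ δ)
    {A : Finset M} (hA : A = {![0, 0], ![1, 0], ![0, δ], ![δ - 1, 1]})
    (f g h : AddMonoidAlgebra k M)
    (hf : f = g * h)
    (hsupp : f.coeff.support = A)
    (s0 : M)
    (hs0 : LexTop 0 (-1) (-1) 0 g.coeff.support s0)
    (hs0' : LexTop 0 (-1) 1 0 g.coeff.support s0)
    (hg2 : ∃ u ∈ g.coeff.support, u ≠ s0) : False := by
  classical
  set g' : AddMonoidAlgebra k M := AddMonoidAlgebra.single (-s0) 1 * g with hg'def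
  set h' : AddMonoidAlgebra k M := AddMonoidAlgebra.single s0 1 * h with hh'def
  have hkey : g' * h' = f := by
    rw [hg'def, hh'def, mul_mul_mul_comm, AddMonoidAlgebra.single_mul_single,
      neg_add_cancel, one_mul, ← AddMonoidAlgebra.one_def, one_mul, hf]
  have hf' : f = g' * h' := hkey.symm
  have hsupp'' : g'.coeff.support = g.coeff.support.map (addLeftEmbedding (-s0)) := by
    rw [hg'def]
    exact AddMonoidAlgebra.support_coeff_single_mul g 1 (fun y => by simp) (-s0)
  have hmem' : ∀ u : M, u ∈ g'.coeff.support ↔ ∃ v ∈ g.coeff.support, -s0 + v = u := by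
    intro u
    rw [hsupp'', Finset.mem_map]
    constructor
    · rintro ⟨v, hv, hvv⟩
      refine ⟨v, hv, ?_⟩
      simpa [addLeftEmbedding_apply] using hvv
    · rintro ⟨v, hv, hvv⟩
      refine ⟨v, hv, ?_⟩
      simpa [addLeftEmbedding_apply] using hvv
  have hg0' : (0 : M) ∈ g'.coeff.support := by
    rw [hmem']
    exact ⟨s0, hs0.mem, neg_add_cancel s0⟩
  have hsouth : ∀ v ∈ g.coeff.support, s0 1 ≤ v 1 ∧ (v 1 = s0 1 → v = s0) := by
    intro v hv
    have hy : s0 1 ≤ v 1 := by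
      have := hs0.le hv
      simp [dot] at this
      omega
    refine ⟨hy, fun he => ?_⟩
    have l1 : s0 0 ≤ v 0 := by
      rcases hs0.max v hv with h' | ⟨h', h''⟩
      · simp [dot] at h'
        omega
      · simp [dot] at h''
        omega
    have l2 : v 0 ≤ s0 0 := by
      rcases hs0'.max v hv with h' | ⟨h', h''⟩
      · simp [dot] at h'
        omega
      · simp [dot] at h''
        omega
    exact M.ext (by omega) he
  have hgs' : ∀ u ∈ g'.coeff.support, 0 ≤ u 1 ∧ (u 1 = 0 → u = 0) := by
    intro u hu
    obtain ⟨v, hv, hvv⟩ := (hmem' u).mp hu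
    obtain ⟨l1, l2⟩ := hsouth v hv
    have hcoord : u 1 = -(s0 1) + v 1 := by
      rw [← hvv]
      simp
    constructor
    · omega
    · intro h0
      have : v = s0 := l2 (by omega)
      rw [← hvv, this]
      exact neg_add_cancel s0
  have hg2' : ∃ u ∈ g'.coeff.support, u ≠ 0 := by
    obtain ⟨w, hw, hwne⟩ := hg2
    refine ⟨-s0 + w, (hmem' _).mpr ⟨w, hw, rfl⟩, fun hc => hwne ?_⟩
    have h2 := neg_add_eq_zero.mp hc
    exact h2.symm
  exact aux_main hδ hA f g' h' hf' hsupp hg0' hgs' hg2'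

end Stmt17Aux

namespace Stmt17Aux

theorem irreducible_main {k : Type*} [Field k] [CharZero k]
    {δ : ℤ} (hδ : 3 ≤ δ)
    {A : Finset M} (hA : A = {![0, 0], ![1, 0], ![0, δ], ![δ - 1, 1]})
    (f : AddMonoidAlgebra k M) (hsupp : f.coeff.support = A) :
    Irreducible f := by
  have hfd1 : LexTop 0 (-1) (-1) 0 f.coeff.support ![0, 0] := by
    rw [hsupp]
    exact topA_d1 hδ hA
  have hfd2 : LexTop 0 (-1) 1 0 f.coeff.support ![1, 0] := by
    rw [hsupp]
    exact topA_d2 hδ hA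
  constructor
  · -- f is not a unit
    intro hunit
    obtain ⟨v, hv⟩ := hunit.exists_right_inv
    have hvne : v ≠ 0 := by
      intro h0
      rw [h0, mul_zero] at hv
      exact one_ne_zero hv.symm
    obtain ⟨τ1, hτ1⟩ := exists_lexTop 0 (-1) (-1) 0 (Finsupp.support_nonempty_iff.mpr (mt AddMonoidAlgebra.coeff_eq_zero.mp hvne))
    obtain ⟨τ2, hτ2⟩ := exists_lexTop 0 (-1) 1 0 (Finsupp.support_nonempty_iff.mpr (mt AddMonoidAlgebra.coeff_eq_zero.mp hvne))
    have hone : ((1 : AddMonoidAlgebra k M)).coeff.support = {0} := by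
      rw [AddMonoidAlgebra.one_def]
      exact Finsupp.support_single_ne_zero _ one_ne_zero
    have htop1 : LexTop 0 (-1) (-1) 0 (1 : AddMonoidAlgebra k M).coeff.support 0 := by
      constructor
      · rw [hone]; simp
      · intro t ht
        rw [hone, Finset.mem_singleton] at ht
        subst ht
        right
        simp
    have htop2 : LexTop 0 (-1) 1 0 (1 : AddMonoidAlgebra k M).coeff.support 0 := by
      constructor
      · rw [hone]; simp
      · intro t ht
        rw [hone, Finset.mem_singleton] at ht
        subst ht
        right
        simp
    have hm1 := lexTop_mul (by norm_num) hfd1 hτ1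
    rw [hv] at hm1
    have e1 : ![0, 0] + τ1 = 0 := lexTop_unique (by norm_num) hm1 htop1
    have hm2 := lexTop_mul (by norm_num) hfd2 hτ2
    rw [hv] at hm2
    have e2 : ![1, 0] + τ2 = 0 := lexTop_unique (by norm_num) hm2 htop2
    have c10 : τ1 0 = 0 := by have := congrFun e1 0; simpa using this
    have c11 : τ1 1 = 0 := by have := congrFun e1 1; simpa using this
    have c20 : τ2 0 = -1 := by have := congrFun e2 0; simp at this; omega
    have c21 : τ2 1 = 0 := by have := congrFun e2 1; simpa using this
    rcases hτ1.max τ2 hτ2.mem with h' | ⟨h', h''⟩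
    · simp [dot] at h'
      omega
    · simp [dot] at h''
      omega
  · -- every factorization has a unit factor
    intro g h hf
    by_contra hcon
    push_neg at hcon
    obtain ⟨hgU, hhU⟩ := hcon
    have hfne : f ≠ 0 := by
      intro h0
      rw [h0, AddMonoidAlgebra.coeff_zero, Finsupp.support_zero] at hsupp
      have hm : (![0, 0] : M) ∈ A := by simp [hA]
      rw [← hsupp] at hm
      simp at hm
    have hgne : g ≠ 0 := by
      intro h0
      rw [h0, zero_mul] at hf
      exact hfne hf
    have hhne : h ≠ 0 := by
      intro h0
      rw [h0, mul_zero] at hf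
      exact hfne hf
    have hGH : (g * h).coeff.support = A := hf ▸ hsupp
    obtain ⟨σm, hσm⟩ := exists_lexTop 0 (-1) (-1) 0 (Finsupp.support_nonempty_iff.mpr (mt AddMonoidAlgebra.coeff_eq_zero.mp hgne))
    obtain ⟨σp, hσp⟩ := exists_lexTop 0 (-1) 1 0 (Finsupp.support_nonempty_iff.mpr (mt AddMonoidAlgebra.coeff_eq_zero.mp hgne))
    obtain ⟨τm, hτm⟩ := exists_lexTop 0 (-1) (-1) 0 (Finsupp.support_nonempty_iff.mpr (mt AddMonoidAlgebra.coeff_eq_zero.mp hhne))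
    obtain ⟨τp, hτp⟩ := exists_lexTop 0 (-1) 1 0 (Finsupp.support_nonempty_iff.mpr (mt AddMonoidAlgebra.coeff_eq_zero.mp hhne))
    have e1 : σm + τm = ![0, 0] := by
      have hm1 := lexTop_mul (by norm_num) hσm hτm
      rw [hGH] at hm1
      exact lexTop_unique (by norm_num) hm1 (topA_d1 hδ hA)
    have e2 : σp + τp = ![1, 0] := by
      have hm2 := lexTop_mul (by norm_num) hσp hτp
      rw [hGH] at hm2
      exact lexTop_unique (by norm_num) hm2 (topA_d2 hδ hA)
    -- the σ's lie on the same level and σm is left of σp; same for τ's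
    have hσy : σm 1 = σp 1 ∧ σm 0 ≤ σp 0 := by
      rcases hσm.max σp hσp.mem with h' | ⟨h', _⟩ <;>
        rcases hσp.max σm hσm.mem with h2 | ⟨h2, h2'⟩ <;>
          simp [dot] at * <;> omega
    have hτy : τm 1 = τp 1 ∧ τm 0 ≤ τp 0 := by
      rcases hτm.max τp hτp.mem with h' | ⟨h', _⟩ <;>
        rcases hτp.max τm hτm.mem with h2 | ⟨h2, h2'⟩ <;>
          simp [dot] at * <;> omega
    have s10 : σm 0 + τm 0 = 0 := by have := congrFun e1 0; simpa using this
    have s11 : σm 1 + τm 1 = 0 := by have := congrFun e1 1; simpa using this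
    have s20 : σp 0 + τp 0 = 1 := by have := congrFun e2 0; simpa using this
    have s21 : σp 1 + τp 1 = 0 := by have := congrFun e2 1; simpa using this
    have hcases : σp 0 = σm 0 ∨ τp 0 = τm 0 := by omega
    rcases hcases with hcase | hcase
    · -- g has a single lowest point
      have hpm : σp = σm := M.ext hcase hσy.1.symm
      rw [hpm] at hσp
      have hg2 : ∃ u ∈ g.coeff.support, u ≠ σm := by
        by_contra hc
        push_neg at hc
        exact hgU (isUnit_of_support_singleton g σm
          (Finset.eq_singleton_iff_unique_mem.mpr ⟨hσm.mem, hc⟩))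
      exact south_case hδ hA f g h hf hsupp σm hσm hσp hg2
    · -- h has a single lowest point
      have hpm : τp = τm := M.ext hcase hτy.1.symm
      rw [hpm] at hτp
      have hh2 : ∃ u ∈ h.coeff.support, u ≠ τm := by
        by_contra hc
        push_neg at hc
        exact hhU (isUnit_of_support_singleton h τm
          (Finset.eq_singleton_iff_unique_mem.mpr ⟨hτm.mem, hc⟩))
      exact south_case hδ hA f h g (by rw [hf, mul_comm]) hsupp τm hτm hτp hh2

end Stmt17Aux

namespace Stmt17Aux

def lmap (c : Fin 2 → ℝ) : (Fin 2 → ℝ) →ₗ[ℝ] ℝ where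
  toFun x := c 0 * x 0 + c 1 * x 1
  map_add' x y := by simp [Pi.add_apply]; ring
  map_smul' r x := by simp [Pi.smul_apply, smul_eq_mul]; ring

lemma extreme_of_strict (B : Finset (Fin 2 → ℝ)) (u : Fin 2 → ℝ) (hu : u ∈ B)
    (c : Fin 2 → ℝ)
    (hstrict : ∀ w ∈ B, w ≠ u → c 0 * w 0 + c 1 * w 1 < c 0 * u 0 + c 1 * u 1) :
    u ∈ Set.extremePoints ℝ (convexHull ℝ (B : Set (Fin 2 → ℝ))) := by
  set ℓ : (Fin 2 → ℝ) →ₗ[ℝ] ℝ := lmap c with hℓ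
  have hle : ∀ y ∈ B, ℓ y ≤ ℓ u := by
    intro y hy
    rcases eq_or_ne y u with rfl | hne
    · exact le_rfl
    · exact (hstrict y hy hne).le
  have key : ∀ x ∈ convexHull ℝ (B : Set (Fin 2 → ℝ)), ℓ x ≤ ℓ u ∧ (ℓ x = ℓ u → x = u) := by
    intro x hx
    rw [Finset.mem_convexHull'] at hx
    obtain ⟨w, hw0, hw1, hwx⟩ := hx
    have hlx : ℓ x = ∑ y ∈ B, w y * ℓ y := by
      rw [← hwx, map_sum]
      congr 1
      funext y
      rw [map_smul, smul_eq_mul]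
    have hle2 : ∑ y ∈ B, w y * ℓ y ≤ ∑ y ∈ B, w y * ℓ u := by
      apply Finset.sum_le_sum
      intro y hy
      exact mul_le_mul_of_nonneg_left (hle y hy) (hw0 y hy)
    have hsum2 : ∑ y ∈ B, w y * ℓ u = ℓ u := by
      rw [← Finset.sum_mul, hw1, one_mul]
    constructor
    · rw [hlx]
      rw [hsum2] at hle2
      exact hle2
    · intro hEq
      have hzero : ∑ y ∈ B, w y * (ℓ u - ℓ y) = 0 := by
        have : ∑ y ∈ B, w y * (ℓ u - ℓ y) = ∑ y ∈ B, w y * ℓ u - ∑ y ∈ B, w y * ℓ y := by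
          rw [← Finset.sum_sub_distrib]
          congr 1
          funext y
          ring
        rw [this, hsum2, ← hlx, hEq, sub_self]
      have hterm : ∀ y ∈ B, w y * (ℓ u - ℓ y) = 0 :=
        (Finset.sum_eq_zero_iff_of_nonneg
          (fun y hy => mul_nonneg (hw0 y hy) (sub_nonneg.mpr (hle y hy)))).mp hzero
      have hwz : ∀ y ∈ B, y ≠ u → w y = 0 := by
        intro y hy hne
        have h1 := hterm y hy
        have h2 : ℓ u - ℓ y > 0 := sub_pos.mpr (hstrict y hy hne)
        rcases mul_eq_zero.mp h1 with h | h
        · exact h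
        · linarith
      have hxu : x = w u • u := by
        rw [← hwx]
        rw [Finset.sum_eq_single_of_mem u hu]
        intro y hy hyne
        rw [hwz y hy hyne, zero_smul]
      have hwu : w u = 1 := by
        rw [Finset.sum_eq_single_of_mem u hu] at hw1
        · exact hw1
        · intro y hy hyne
          exact hwz y hy hyne
      rw [hxu, hwu, one_smul]
  rw [mem_extremePoints]
  refine ⟨subset_convexHull ℝ _ hu, ?_⟩
  intro x1 hx1 x2 hx2 hseg
  obtain ⟨a, b, ha, hb, hab, hsum⟩ := hseg
  have k1 := key x1 hx1
  have k2 := key x2 hx2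
  have hlu : a * ℓ x1 + b * ℓ x2 = ℓ u := by
    rw [← hsum]
    rw [map_add, map_smul, map_smul, smul_eq_mul, smul_eq_mul]
  have hsplit : a * (ℓ u - ℓ x1) + b * (ℓ u - ℓ x2) = 0 := by
    linear_combination (ℓ u) * hab - hlu
  have he1 : ℓ u ≤ ℓ x1 := by
    nlinarith [hsplit, mul_nonneg hb.le (sub_nonneg.mpr k2.1), ha]
  have he2 : ℓ u ≤ ℓ x2 := by
    nlinarith [hsplit, mul_nonneg ha.le (sub_nonneg.mpr k1.1), hb]
  exact ⟨k1.2 (le_antisymm k1.1 he1), k2.2 (le_antisymm k2.1 he2)⟩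

end Stmt17Aux


open Stmt17Aux in
/-- Let `A = {(0,0), (1,0), (0,δ), (δ−1,1)} ⊂ ℤ²` for an integer `δ ≥ 3`.  Then the convex
hull of `A` is a quadrilateral (all four points are extreme points of the hull) with no
two parallel edges (the four edge direction vectors `(1,0)`, `(δ−2,1)`, `(−(δ−1),δ−1)`,
`(0,−δ)` are pairwise non-parallel), and every Laurent polynomial with support `A` over an
algebraically closed field of characteristic `0` is irreducible. -/
theorem statement17 {k : Type*} [Field k] [IsAlgClosed k] [CharZero k]
    (δ : ℤ) (hδ : 3 ≤ δ)
    (A : Finset (Fin 2 → ℤ))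
    (hA : A = {![0, 0], ![1, 0], ![0, δ], ![δ - 1, 1]})
    (f : AddMonoidAlgebra k (Fin 2 → ℤ)) (hsupp : f.coeff.support = A) :
    (∀ u ∈ A, toR u ∈ Set.extremePoints ℝ (convexHull ℝ (toR '' (↑A : Set (Fin 2 → ℤ))))) ∧
    (∀ i j : Fin 4, i ≠ j →
      cross (![![1, 0], ![δ - 2, 1], ![-(δ - 1), δ - 1], ![0, -δ]] i)
            (![![1, 0], ![δ - 2, 1], ![-(δ - 1), δ - 1], ![0, -δ]] j) ≠ 0) ∧
    Irreducible f := by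
  have hδR : (3 : ℝ) ≤ (δ : ℝ) := by exact_mod_cast hδ
  refine ⟨?_, ?_, ?_⟩
  · -- all four points are extreme points
    intro u hu
    have hmem : toR u ∈ A.image toR := Finset.mem_image_of_mem toR hu
    rw [← Finset.coe_image]
    rw [hA] at hu
    simp only [Finset.mem_insert, Finset.mem_singleton] at hu
    have hcases : ∀ w ∈ A.image toR, ∃ v ∈ A, w = toR v := by
      intro w hw
      obtain ⟨v, hv, rfl⟩ := Finset.mem_image.mp hw
      exact ⟨v, hv, rfl⟩
    rcases hu with rfl | rfl | rfl | rfl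
    · refine extreme_of_strict _ _ hmem ![-1, -1] ?_
      intro w hw hne
      obtain ⟨v, hv, rfl⟩ := Finset.mem_image.mp hw
      rw [hA] at hv
      simp only [Finset.mem_insert, Finset.mem_singleton] at hv
      rcases hv with rfl | rfl | rfl | rfl
      · exact absurd rfl hne
      · simp [toR]
      · simp [toR]
        all_goals (push_cast; nlinarith [hδR])
      · simp [toR]
        all_goals (push_cast; nlinarith [hδR])
    · refine extreme_of_strict _ _ hmem ![1, 1 - (δ : ℝ)] ?_
      intro w hw hne
      obtain ⟨v, hv, rfl⟩ := Finset.mem_image.mp hw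
      rw [hA] at hv
      simp only [Finset.mem_insert, Finset.mem_singleton] at hv
      rcases hv with rfl | rfl | rfl | rfl
      · simp [toR]
      · exact absurd rfl hne
      · simp [toR]
        all_goals (push_cast; nlinarith [hδR])
      · simp [toR]
        all_goals (push_cast; nlinarith [hδR])
    · refine extreme_of_strict _ _ hmem ![0, 1] ?_
      intro w hw hne
      obtain ⟨v, hv, rfl⟩ := Finset.mem_image.mp hw
      rw [hA] at hv
      simp only [Finset.mem_insert, Finset.mem_singleton] at hv
      rcases hv with rfl | rfl | rfl | rfl
      · simp [toR]
        all_goals (push_cast; nlinarith [hδR])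
      · simp [toR]
        all_goals (push_cast; nlinarith [hδR])
      · exact absurd rfl hne
      · simp [toR]
        all_goals (push_cast; nlinarith [hδR])
    · refine extreme_of_strict _ _ hmem ![2, 3 - (δ : ℝ)] ?_
      intro w hw hne
      obtain ⟨v, hv, rfl⟩ := Finset.mem_image.mp hw
      rw [hA] at hv
      simp only [Finset.mem_insert, Finset.mem_singleton] at hv
      rcases hv with rfl | rfl | rfl | rfl
      · simp [toR]
        all_goals (push_cast; nlinarith [hδR])
      · simp [toR]
        all_goals (push_cast; nlinarith [hδR])
      · simp [toR]
        all_goals (push_cast; nlinarith [hδR])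
      · exact absurd rfl hne
  · -- the four edge directions are pairwise non-parallel
    intro i j hij
    fin_cases i <;> fin_cases j <;>
      first
        | exact absurd rfl hij
        | (simp [cross]
           all_goals first
             | (intro hc; nlinarith [hδ])
             | (constructor <;> omega))
  · -- irreducibility
    exact irreducible_main hδ hA f hsupp
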